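/- arXiv:1904.08119 — 4 statements merged into one kernel-verified Lean document; each statement's English description precedes it below -/
import Mathlib

section
/- Let S be a schedule, ≪ a version order for S, and t_j ∈ trans(S) a running transaction with c_j, a_j ∉ S, such that S is recoverable, MVSG(S, ≪) is acyclic, and S is strictly serializable. If a version order ≪' for S satisfies NWR for the triple (S, ≪, t_j) — in fact, if merely RC-Rule holds, i.e., every version x_i ∈ rs_j has c_i ∈ S — then S ∪ {c_j} is recoverable. (Lemma 3, Recoverable.) -/
/-!
A formalization of multiversion schedules, the multiversion serialization
graph (MVSG), strict serializability, recoverability, and the Non-visible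
Write Rule (NWR), following "NWR: Rethinking Thomas Write Rule for
Omittable Write Operations".

A version of a data item `x` is identified by the transaction that wrote it:
`w_i(x_i)` is recorded as `Op.write t_i x`, and the version `x_i` is the pair
`(x, t_i)`.  `r_i(x_j)` is recorded as `Op.read t_i x t_j`.
-/

namespace MVCC

/-- Operations of multiversion schedules. `read t x w` is `r_t(x_w)`
(transaction `t` reads the version of item `x` written by `w`);
`write t x` is `w_t(x_t)`; `commit t` is `c_t`; `abort t` is `a_t`. -/
inductive Op (Tx : Type*) (Item : Type*) where
  | read  (t : Tx) (x : Item) (w : Tx)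
  | write (t : Tx) (x : Item)
  | commit (t : Tx)
  | abort (t : Tx)

/-- The transaction an operation belongs to. -/
def Op.owner {Tx Item : Type*} : Op Tx Item → Tx
  | .read t _ _ => t
  | .write t _ => t
  | .commit t => t
  | .abort t => t

/-- A multiversion schedule: a set `trans` of transactions, a set `ops` of
operations (each belonging to a transaction of the schedule), and the
total operation order `<_S` (as the relation `lt`). -/
structure Schedule (Tx : Type*) (Item : Type*) where
  trans : Set Tx
  ops : Set (Op Tx Item)
  lt : Op Tx Item → Op Tx Item → Prop
  owners : ∀ p ∈ ops, Op.owner p ∈ trans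

namespace Schedule

variable {Tx Item : Type*} (S : Schedule Tx Item)

/-- `w_t(x_t) ∈ S` : the version `x_t` is written in `S`. -/
def writes (t : Tx) (x : Item) : Prop := Op.write t x ∈ S.ops

/-- `c_t ∈ S`. -/
def committed (t : Tx) : Prop := Op.commit t ∈ S.ops

/-- `a_t ∈ S`. -/
def aborted (t : Tx) : Prop := Op.abort t ∈ S.ops

/-- `t` reads the version of `x` written by the (distinct) transaction `w`,
i.e. the version `x_w ∈ rs_t`. -/
def readsFrom (t : Tx) (x : Item) (w : Tx) : Prop :=
  t ≠ w ∧ S.writes w x ∧ Op.read t x w ∈ S.ops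

/-- `p` is an operation of transaction `t` in `S` (`p ∈ t`). -/
def opOf (p : Op Tx Item) (t : Tx) : Prop := p ∈ S.ops ∧ Op.owner p = t

/-- `t` is a running transaction of `S`: `t ∈ trans(S)` and `c_t, a_t ∉ S`. -/
def running (t : Tx) : Prop := t ∈ S.trans ∧ ¬ S.committed t ∧ ¬ S.aborted t

/-- `S` is recoverable: for all distinct `t_i, t_j ∈ trans(S)`, if `t_j` reads
a version written by `t_i` and `c_j ∈ S`, then `c_i ∈ S` and `c_i <_S c_j`. -/
def Recoverable : Prop :=
  ∀ ti tj : Tx, ti ∈ S.trans → tj ∈ S.trans → ti ≠ tj →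
    (∃ x : Item, S.readsFrom tj x ti) → S.committed tj →
      S.committed ti ∧ S.lt (Op.commit ti) (Op.commit tj)

/-- `S ∪ {c_j}` : append the commit operation `c_j` at the end of `<_S`. -/
def addCommit (j : Tx) : Schedule Tx Item where
  trans := insert j S.trans
  ops := insert (Op.commit j) S.ops
  lt := fun p q => S.lt p q ∨ (p ∈ S.ops ∧ q = Op.commit j)
  owners := by
    intro p hp
    rcases hp with h | h
    · subst h; exact Set.mem_insert _ _
    · exact Set.mem_insert_of_mem _ (S.owners p h)

end Schedule

/-- A version order `≪` for a schedule `S`: for each data item `x`, an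
irreflexive (strict) total order on the versions of `x` written in `S`;
`lt x i k` means `x_i <_v x_k`. -/
structure VersionOrder {Tx Item : Type*} (S : Schedule Tx Item) where
  lt : Item → Tx → Tx → Prop
  irrefl : ∀ x i, ¬ lt x i i
  trans : ∀ x i j k, lt x i j → lt x j k → lt x i k
  total : ∀ x i j, S.writes i x → S.writes j x → i ≠ j → lt x i j ∨ lt x j i

variable {Tx Item : Type*}

/-- The edge `t_a →(wr) t_b` of `MVSG(S, ≪)`: the committed transaction `t_b`
reads some version written by the committed transaction `t_a`. -/
def wrEdge (S : Schedule Tx Item) (a b : Tx) : Prop :=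
  S.committed a ∧ S.committed b ∧ ∃ x : Item, S.readsFrom b x a

/-- The edge `t_a →(rw) t_b` of `MVSG(S, ≪)` (anti-dependency): `t_a` reads a
version `x_j` and the committed `t_b` writes `x_b` with `x_j <_v x_b`. -/
def rwEdge (S : Schedule Tx Item) (vlt : Item → Tx → Tx → Prop) (a b : Tx) : Prop :=
  a ≠ b ∧ S.committed a ∧ S.committed b ∧
    ∃ (x : Item) (j : Tx), S.committed j ∧ S.readsFrom a x j ∧
      S.writes b x ∧ vlt x j b

/-- The edge `t_a →(ww) t_b` of `MVSG(S, ≪)`: `t_a` writes `x_a`, some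
committed `t_i` (distinct from `t_a`) reads the version `x_b` written
by `t_b`, and `x_a <_v x_b`. -/
def wwEdge (S : Schedule Tx Item) (vlt : Item → Tx → Tx → Prop) (a b : Tx) : Prop :=
  a ≠ b ∧ S.committed a ∧ S.committed b ∧
    ∃ (x : Item) (i : Tx), S.committed i ∧ S.readsFrom i x b ∧ i ≠ a ∧
      S.writes a x ∧ vlt x a b

/-- The edge relation of `MVSG(S, ≪)` (nodes are the committed
transactions `trans(CP(S))`). -/
def mvsgEdge (S : Schedule Tx Item) (vlt : Item → Tx → Tx → Prop) (a b : Tx) : Prop :=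
  wrEdge S a b ∨ rwEdge S vlt a b ∨ wwEdge S vlt a b

/-- A relation (graph) is acyclic: no nonempty directed path from a node
to itself. -/
def Acyclic (r : Tx → Tx → Prop) : Prop := ∀ t : Tx, ¬ Relation.TransGen r t t

/-- `RN(t)`: the set of transactions reachable from `t` by a nonempty
directed path. -/
def RN (r : Tx → Tx → Prop) (t : Tx) : Set Tx := {u | Relation.TransGen r t u}

/-- `overwriters_j` : transactions `t_k` with the edge `t_j →(rw) t_k`. -/
def overwriters (S : Schedule Tx Item) (vlt : Item → Tx → Tx → Prop) (tj : Tx) : Set Tx :=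
  {tk | rwEdge S vlt tj tk}

/-- `successors_j` : transactions `t_k` with the edge `t_j →(ww) t_k`. -/
def successors (S : Schedule Tx Item) (vlt : Item → Tx → Tx → Prop) (tj : Tx) : Set Tx :=
  {tk | wwEdge S vlt tj tk}

/-- `M` is a (strict) total order on the set `s`. -/
def IsLinearOrderOn (M : Tx → Tx → Prop) (s : Set Tx) : Prop :=
  (∀ a ∈ s, ¬ M a a) ∧
  (∀ a ∈ s, ∀ b ∈ s, ∀ c ∈ s, M a b → M b c → M a c) ∧
  (∀ a ∈ s, ∀ b ∈ s, a ≠ b → (M a b ∨ M b a))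

/-- `M` topologically sorts `MVSG(S, ≪)`: every edge `t → t'` satisfies `t <_M t'`. -/
def TopoSorts (S : Schedule Tx Item) (vlt : Item → Tx → Tx → Prop)
    (M : Tx → Tx → Prop) : Prop :=
  ∀ a b : Tx, mvsgEdge S vlt a b → M a b

/-- `M` is compatible with the wall-clock precedence order: for committed
`t_i ≠ t_k`, if every operation of `t_i` precedes every operation of `t_k`
in `<_S`, then `t_i <_M t_k`. -/
def RespectsPrecedence (S : Schedule Tx Item) (M : Tx → Tx → Prop) : Prop :=
  ∀ ti tk : Tx, S.committed ti → S.committed tk → ti ≠ tk →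
    (∀ p q : Op Tx Item, S.opOf p ti → S.opOf q tk → S.lt p q) → M ti tk

/-- `S` is strictly serializable: there is a version order `≪` with
`MVSG(S, ≪)` acyclic and a total order `M` on `trans(CP(S))` that
topologically sorts `MVSG(S, ≪)` and is compatible with the wall-clock
precedence order of transactions. -/
def StrictlySerializable (S : Schedule Tx Item) : Prop :=
  ∃ (V : VersionOrder S) (M : Tx → Tx → Prop),
    Acyclic (mvsgEdge S V.lt) ∧
    IsLinearOrderOn M {t : Tx | S.committed t} ∧
    TopoSorts S V.lt M ∧
    RespectsPrecedence S M

/-- NV-Rule: every version `x_j ∈ ws_j` has some version `x_k` of the same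
item with `x_j <_v' x_k`. -/
def NV_Rule (S : Schedule Tx Item) (V' : VersionOrder S) (tj : Tx) : Prop :=
  ∀ x : Item, S.writes tj x → ∃ k : Tx, S.writes k x ∧ V'.lt x tj k

/-- PV-Rule: on versions distinct from the versions written by `t_j`,
`≪'` agrees with `≪`. -/
def PV_Rule (S : Schedule Tx Item) (V V' : VersionOrder S) (tj : Tx) : Prop :=
  ∀ (x : Item) (i k : Tx), S.writes i x → S.writes k x →
    i ≠ tj → k ≠ tj → V.lt x i k → V'.lt x i k

/-- SR-Rule: `t_j ∉ RN(t_j)` in `MVSG(S ∪ {c_j}, ≪')`. -/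
def SR_Rule (S : Schedule Tx Item) (V' : VersionOrder S) (tj : Tx) : Prop :=
  tj ∉ RN (mvsgEdge (S.addCommit tj) V'.lt) tj

/-- ST-Rule: every `t_k ∈ RN(t_j)` (in `MVSG(S ∪ {c_j}, ≪')`) has some
operation `p_j ∈ t_j` with `p_j <_S c_k`. -/
def ST_Rule (S : Schedule Tx Item) (V' : VersionOrder S) (tj : Tx) : Prop :=
  ∀ tk : Tx, tk ∈ RN (mvsgEdge (S.addCommit tj) V'.lt) tj →
    ∃ p : Op Tx Item, S.opOf p tj ∧ S.lt p (Op.commit tk)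

/-- RC-Rule: every version `x_i ∈ rs_j` has `c_i ∈ S`. -/
def RC_Rule (S : Schedule Tx Item) (tj : Tx) : Prop :=
  ∀ (x : Item) (ti : Tx), S.readsFrom tj x ti → S.committed ti

/-- The version order `≪'` satisfies NWR for the triple `(S, ≪, t_j)`. -/
def SatisfiesNWR (S : Schedule Tx Item) (V V' : VersionOrder S) (tj : Tx) : Prop :=
  NV_Rule S V' tj ∧ PV_Rule S V V' tj ∧ SR_Rule S V' tj ∧
    ST_Rule S V' tj ∧ RC_Rule S tj

end MVCC

namespace MVCC

namespace Schedule

variable {Tx Item : Type*} (S : Schedule Tx Item) {j : Tx}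

theorem addCommit_trans_of_mem (hj : j ∈ S.trans) : (S.addCommit j).trans = S.trans :=
  Set.insert_eq_of_mem hj

@[simp]
theorem readsFrom_addCommit {t w : Tx} {x : Item} :
    (S.addCommit j).readsFrom t x w ↔ S.readsFrom t x w := by
  simp [readsFrom, writes, addCommit]

@[simp]
theorem committed_addCommit {t : Tx} : (S.addCommit j).committed t ↔ t = j ∨ S.committed t := by
  simp [committed, addCommit]

variable {S} in
theorem Recoverable.addCommit (hrec : S.Recoverable) (hj : j ∈ S.trans) (hRC : RC_Rule S j) :
    (S.addCommit j).Recoverable := by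
  intro ti tk hti htk hne ⟨x, hread⟩ hck
  rw [addCommit_trans_of_mem S hj] at hti htk
  rw [readsFrom_addCommit] at hread
  rcases (S.committed_addCommit).1 hck with rfl | hck
  · have hci : S.committed ti := hRC x ti hread
    exact ⟨(S.committed_addCommit).2 (Or.inr hci), Or.inr ⟨hci, rfl⟩⟩
  · obtain ⟨hci, hlt⟩ := hrec ti tk hti htk hne ⟨x, hread⟩ hck
    exact ⟨(S.committed_addCommit).2 (Or.inr hci), Or.inl hlt⟩

end Schedule

theorem nwr_recoverable_general {Tx Item : Type*} (S : Schedule Tx Item) (tj : Tx)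
    (htj : tj ∈ S.trans) (hrec : S.Recoverable) (hRC : RC_Rule S tj) :
    (S.addCommit tj).Recoverable :=
  hrec.addCommit htj hRC

/-- **Lemma 3 (Recoverable).**  Let `S` be a schedule, `≪` a version order for
`S`, and `t_j ∈ trans(S)` a running transaction (`c_j, a_j ∉ S`), such that
`S` is recoverable, `MVSG(S, ≪)` is acyclic, and `S` is strictly
serializable.  If a version order `≪'` for `S` merely satisfies RC-Rule
(every version `x_i ∈ rs_j` has `c_i ∈ S`) — in particular if it satisfies
NWR — then `S ∪ {c_j}` is recoverable. -/
theorem nwr_recoverable {Tx Item : Type*} (S : Schedule Tx Item)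
    (V : VersionOrder S) (tj : Tx)
    (htj : tj ∈ S.trans) (hnc : ¬ S.committed tj) (hna : ¬ S.aborted tj)
    (hrec : S.Recoverable)
    (hacyc : Acyclic (mvsgEdge S V.lt))
    (hss : StrictlySerializable S)
    (V' : VersionOrder S)
    (hRC : RC_Rule S tj) :
    (S.addCommit tj).Recoverable :=
  nwr_recoverable_general S tj htj hrec hRC

end MVCC
end

section
/- Let S be a schedule, t_j ∈ trans(S) a running transaction with c_j, a_j ∉ S, and let ≪ and ≪' be two version orders for S such that PV-Rule holds: for all versions x_i, x_k of a common data item x that are both distinct from the version x_j ∈ ws_j of x (if any), x_i <_v x_k implies x_i <_v' x_k. Then the graphs MVSG(S, ≪) and MVSG(S, ≪') are identical: they have the same node set trans(CP(S)) and exactly the same wr-, rw-, and ww-edges. -/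
namespace MVCC

section

variable {Tx Item : Type*}

/-- The converse of PV-Rule follows from totality of `≪` and irreflexivity of `≪'`. -/
theorem PV_Rule.lt_iff {S : Schedule Tx Item} {V V' : VersionOrder S} {tj : Tx}
    (hPV : PV_Rule S V V' tj) {x : Item} {i k : Tx} (hi : S.writes i x) (hk : S.writes k x)
    (hij : i ≠ tj) (hkj : k ≠ tj) : V.lt x i k ↔ V'.lt x i k := by
  refine ⟨hPV x i k hi hk hij hkj, fun h' => ?_⟩
  have hik : i ≠ k := by
    rintro rfl
    exact V'.irrefl x i h'
  refine (V.total x i k hi hk hik).resolve_right fun hki => ?_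
  exact V'.irrefl x i (V'.trans x i k i h' (hPV x k i hk hi hkj hij hki))

theorem PV_Rule.lt_iff_of_committed {S : Schedule Tx Item} {V V' : VersionOrder S} {tj : Tx}
    (hPV : PV_Rule S V V' tj) (hnc : ¬ S.committed tj) {x : Item} {i k : Tx}
    (hci : S.committed i) (hck : S.committed k) (hi : S.writes i x) (hk : S.writes k x) :
    V.lt x i k ↔ V'.lt x i k :=
  hPV.lt_iff hi hk (by rintro rfl; exact hnc hci) (by rintro rfl; exact hnc hck)

section congr

variable {S : Schedule Tx Item} {vlt vlt' : Item → Tx → Tx → Prop}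

theorem rwEdge_congr
    (h : ∀ x i k, S.committed i → S.committed k → S.writes i x → S.writes k x →
      (vlt x i k ↔ vlt' x i k)) (a b : Tx) :
    rwEdge S vlt a b ↔ rwEdge S vlt' a b := by
  unfold rwEdge
  refine and_congr_right fun _ => and_congr_right fun _ => and_congr_right fun hcb => ?_
  refine exists_congr fun x => exists_congr fun j => and_congr_right fun hcj => ?_
  refine and_congr_right fun hrf => and_congr_right fun hwb => ?_
  exact h x j b hcj hcb hrf.2.1 hwb

theorem wwEdge_congr
    (h : ∀ x i k, S.committed i → S.committed k → S.writes i x → S.writes k x →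
      (vlt x i k ↔ vlt' x i k)) (a b : Tx) :
    wwEdge S vlt a b ↔ wwEdge S vlt' a b := by
  unfold wwEdge
  refine and_congr_right fun _ => and_congr_right fun hca => and_congr_right fun hcb => ?_
  refine exists_congr fun x => exists_congr fun i => and_congr_right fun _ => ?_
  refine and_congr_right fun hrf => and_congr_right fun _ => and_congr_right fun hwa => ?_
  exact h x a b hca hcb hwa hrf.2.1

theorem mvsgEdge_congr
    (h : ∀ x i k, S.committed i → S.committed k → S.writes i x → S.writes k x →
      (vlt x i k ↔ vlt' x i k)) (a b : Tx) :
    mvsgEdge S vlt a b ↔ mvsgEdge S vlt' a b :=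
  or_congr Iff.rfl (or_congr (rwEdge_congr h a b) (wwEdge_congr h a b))

end congr

end

theorem pv_rule_mvsg_identical_general {Tx Item : Type*} (S : Schedule Tx Item) (tj : Tx)
    (hnc : ¬ S.committed tj)
    (V V' : VersionOrder S)
    (hPV : PV_Rule S V V' tj) :
    ∀ a b : Tx,
      (wrEdge S a b ↔ wrEdge S a b) ∧
      (rwEdge S V.lt a b ↔ rwEdge S V'.lt a b) ∧
      (wwEdge S V.lt a b ↔ wwEdge S V'.lt a b) ∧
      (mvsgEdge S V.lt a b ↔ mvsgEdge S V'.lt a b) := by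
  have agree : ∀ x i k, S.committed i → S.committed k → S.writes i x → S.writes k x →
      (V.lt x i k ↔ V'.lt x i k) := fun _ _ _ => hPV.lt_iff_of_committed hnc
  intro a b
  exact ⟨Iff.rfl, rwEdge_congr agree a b, wwEdge_congr agree a b, mvsgEdge_congr agree a b⟩

/-- **PV-Rule preserves the MVSG.**  Let `S` be a schedule, `t_j ∈ trans(S)` a
running transaction (`c_j, a_j ∉ S`), and `≪, ≪'` two version orders for `S`
satisfying PV-Rule.  Then `MVSG(S, ≪)` and `MVSG(S, ≪')` are identical: they
have the same node set (the committed transactions of `S`) and exactly the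
same wr-, rw-, and ww-edges. -/
theorem pv_rule_mvsg_identical {Tx Item : Type*} (S : Schedule Tx Item) (tj : Tx)
    (htj : tj ∈ S.trans) (hnc : ¬ S.committed tj) (hna : ¬ S.aborted tj)
    (V V' : VersionOrder S)
    (hPV : PV_Rule S V V' tj) :
    ∀ a b : Tx,
      (wrEdge S a b ↔ wrEdge S a b) ∧
      (rwEdge S V.lt a b ↔ rwEdge S V'.lt a b) ∧
      (wwEdge S V.lt a b ↔ wwEdge S V'.lt a b) ∧
      (mvsgEdge S V.lt a b ↔ mvsgEdge S V'.lt a b) :=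
  pv_rule_mvsg_identical_general S tj hnc V V' hPV

end MVCC
end

section
/- Let S be a schedule and t_j ∈ trans(S) a running transaction with c_j, a_j ∉ S and w_j(x_j) ∈ t_j. Suppose a committed transaction t_k (c_k ∈ S, t_k ≠ t_j) performs a read-modify-write on the data item x, i.e., r_k(x_i) ∈ t_k and w_k(x_k) ∈ t_k where the writer of the version x_i is committed; suppose further that some committed transaction t_m with t_m ≠ t_j reads the version x_k (r_m(x_k) ∈ t_m). If a version order ≪' for S satisfies x_i <_v' x_j <_v' x_k, then MVSG(S ∪ {c_j}, ≪') contains the cycle t_k →(rw) t_j →(ww) t_k; in particular t_j ∈ RN(t_j), so SR-Rule fails and MVSG(S ∪ {c_j}, ≪') is not acyclic. -/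
namespace MVCC

namespace Schedule

variable {Tx Item : Type*} {S T : Schedule Tx Item}

theorem ops_subset_addCommit (S : Schedule Tx Item) (j : Tx) : S.ops ⊆ (S.addCommit j).ops :=
  Set.subset_insert _ _

theorem committed_addCommit_self (S : Schedule Tx Item) (j : Tx) :
    (S.addCommit j).committed j :=
  Set.mem_insert _ _

theorem committed.mono {t : Tx} (h : S.committed t) (hST : S.ops ⊆ T.ops) : T.committed t :=
  hST h

theorem writes.mono {t : Tx} {x : Item} (h : S.writes t x) (hST : S.ops ⊆ T.ops) :
    T.writes t x :=
  hST h

theorem readsFrom.mono {t w : Tx} {x : Item} (h : S.readsFrom t x w) (hST : S.ops ⊆ T.ops) :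
    T.readsFrom t x w :=
  ⟨h.1, h.2.1.mono hST, hST h.2.2⟩

end Schedule

theorem mem_RN_self_of_edge_of_edge {Tx : Type*} {r : Tx → Tx → Prop} {a b : Tx}
    (hab : r a b) (hba : r b a) : a ∈ RN r a :=
  .head hab (.single hba)

theorem rmw_breaks_sr_rule_general {Tx Item : Type*} (S : Schedule Tx Item)
    (tj : Tx) (x : Item)
    (hwj : S.writes tj x)
    (tk ti tm : Tx)
    (hck : S.committed tk) (hktj : tk ≠ tj)
    (hreadk : S.readsFrom tk x ti) (hci : S.committed ti)
    (hcm : S.committed tm) (hmtj : tm ≠ tj)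
    (hreadm : S.readsFrom tm x tk)
    (V' : VersionOrder S)
    (hij : V'.lt x ti tj) (hjk : V'.lt x tj tk) :
    rwEdge (S.addCommit tj) V'.lt tk tj ∧
    wwEdge (S.addCommit tj) V'.lt tj tk ∧
    tj ∈ RN (mvsgEdge (S.addCommit tj) V'.lt) tj ∧
    ¬ SR_Rule S V' tj ∧
    ¬ Acyclic (mvsgEdge (S.addCommit tj) V'.lt) := by
  have hsub := S.ops_subset_addCommit tj
  have hcj := S.committed_addCommit_self tj
  have hrw : rwEdge (S.addCommit tj) V'.lt tk tj :=
    ⟨hktj, hck.mono hsub, hcj, x, ti, hci.mono hsub, hreadk.mono hsub, hwj.mono hsub, hij⟩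
  have hww : wwEdge (S.addCommit tj) V'.lt tj tk :=
    ⟨hktj.symm, hcj, hck.mono hsub, x, tm, hcm.mono hsub, hreadm.mono hsub, hmtj,
      hwj.mono hsub, hjk⟩
  have hcycle : tj ∈ RN (mvsgEdge (S.addCommit tj) V'.lt) tj :=
    mem_RN_self_of_edge_of_edge (Or.inr (Or.inr hww)) (Or.inr (Or.inl hrw))
  exact ⟨hrw, hww, hcycle, fun hsr => hsr hcycle, fun hacyc => hacyc tj hcycle⟩

/-- **Read-modify-write breaks SR-Rule.**  Let `S` be a schedule and
`t_j ∈ trans(S)` a running transaction (`c_j, a_j ∉ S`) with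
`w_j(x_j) ∈ t_j`.  Suppose a committed transaction `t_k ≠ t_j` performs a
read-modify-write on the item `x`, i.e. `r_k(x_i) ∈ t_k` and
`w_k(x_k) ∈ t_k`, where the writer `t_i` of the version `x_i` is committed;
and suppose some committed transaction `t_m ≠ t_j` reads the version `x_k`.
If a version order `≪'` for `S` satisfies `x_i <_v' x_j <_v' x_k`, then
`MVSG(S ∪ {c_j}, ≪')` contains the cycle `t_k →(rw) t_j →(ww) t_k`;
in particular `t_j ∈ RN(t_j)`, SR-Rule fails, and `MVSG(S ∪ {c_j}, ≪')` is
not acyclic. -/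
theorem rmw_breaks_sr_rule {Tx Item : Type*} (S : Schedule Tx Item)
    (tj : Tx) (x : Item)
    (htj : tj ∈ S.trans) (hnc : ¬ S.committed tj) (hna : ¬ S.aborted tj)
    (hwj : S.writes tj x)
    (tk ti tm : Tx)
    (hck : S.committed tk) (hktj : tk ≠ tj)
    (hreadk : S.readsFrom tk x ti) (hci : S.committed ti)
    (hwk : S.writes tk x)
    (hcm : S.committed tm) (hmtj : tm ≠ tj)
    (hreadm : S.readsFrom tm x tk)
    (V' : VersionOrder S)
    (hij : V'.lt x ti tj) (hjk : V'.lt x tj tk) :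
    rwEdge (S.addCommit tj) V'.lt tk tj ∧
    wwEdge (S.addCommit tj) V'.lt tj tk ∧
    tj ∈ RN (mvsgEdge (S.addCommit tj) V'.lt) tj ∧
    ¬ SR_Rule S V' tj ∧
    ¬ Acyclic (mvsgEdge (S.addCommit tj) V'.lt) :=
  rmw_breaks_sr_rule_general S tj x hwj tk ti tm hck hktj hreadk hci hcm hmtj hreadm V' hij hjk

end MVCC
end

section
/- Let S be a recoverable schedule, t_j ∈ trans(S) a running transaction with c_j, a_j ∉ S for which RC-Rule holds (every version x_i ∈ rs_j has c_i ∈ S), and ≪' a version order for S. In MVSG(S ∪ {c_j}, ≪'), let successors_j := { t_k : the graph contains the edge t_j →(ww) t_k } and let T := successors_j ∪ ⋃_{t_k ∈ successors_j} RN(t_k). Suppose that for every t_m ∈ T: (C) there exist no versions y_m ∈ ws_m and y_n ∈ rs_j of a common data item y with y_m <_v' y_n, and no version of a data item written by t_m is read by t_j (i.e., no y_m ∈ ws_m with y_m ∈ rs_j); and (D) there exist no versions y_g ∈ rs_m and y_j ∈ ws_j of a common data item y with y_g <_v' y_j. Then no transaction t_k ∈ successors_j has a directed path to t_j in MVSG(S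 ∪ {c_j}, ≪'). -/
namespace MVCC

namespace Schedule

variable {Tx Item : Type*} (S : Schedule Tx Item) (j : Tx)

@[simp]
theorem addCommit_writes (t : Tx) (x : Item) : (S.addCommit j).writes t x ↔ S.writes t x := by
  simp [writes, addCommit]

@[simp]
theorem addCommit_readsFrom (t : Tx) (x : Item) (w : Tx) :
    (S.addCommit j).readsFrom t x w ↔ S.readsFrom t x w := by
  simp [readsFrom, addCommit, writes]

@[simp]
theorem addCommit_committed (t : Tx) : (S.addCommit j).committed t ↔ t = j ∨ S.committed t := by
  simp [committed, addCommit]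

variable {S j}

theorem Recoverable.not_readsFrom_of_not_committed (hrec : S.Recoverable) (hj : j ∈ S.trans)
    (hnc : ¬ S.committed j) {i : Tx} (hci : S.committed i) (x : Item) : ¬ S.readsFrom i x j :=
  fun hread => hnc (hrec j i hj (S.owners _ hread.2.2) (Ne.symm hread.1) ⟨x, hread⟩ hci).1

/-- There is no `ww` edge `t_m → t_j`: it would need a transaction committed in `S` that
reads from the uncommitted `t_j`. -/
theorem Recoverable.mvsgEdge_addCommit_into (hrec : S.Recoverable) (hj : j ∈ S.trans)
    (hnc : ¬ S.committed j) {vlt : Item → Tx → Tx → Prop} {m : Tx}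
    (hedge : mvsgEdge (S.addCommit j) vlt m j) :
    (∃ y, S.readsFrom j y m) ∨ ∃ y g, S.readsFrom m y g ∧ S.writes j y ∧ vlt y g j := by
  rcases hedge with ⟨-, -, y, hread⟩ | ⟨-, -, -, y, g, -, hread, hwrite, hlt⟩ |
      ⟨-, -, -, y, i, hci, hread, -, -, -⟩
  · exact Or.inl ⟨y, (S.addCommit_readsFrom j _ _ _).mp hread⟩
  · simp only [addCommit_readsFrom, addCommit_writes] at hread hwrite
    exact Or.inr ⟨y, g, hread, hwrite, hlt⟩
  · rw [addCommit_readsFrom] at hread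
    rcases (S.addCommit_committed j i).mp hci with rfl | hci
    · exact absurd rfl hread.1
    · exact absurd hread (hrec.not_readsFrom_of_not_committed hj hnc hci y)

end Schedule

theorem mem_union_biUnion_RN_of_reflTransGen {Tx : Type*} {r : Tx → Tx → Prop} {s : Set Tx}
    {a b : Tx} (ha : a ∈ s) (hab : Relation.ReflTransGen r a b) :
    b ∈ s ∪ ⋃ c ∈ s, RN r c := by
  rcases Relation.reflTransGen_iff_eq_or_transGen.mp hab with rfl | hab
  · exact Or.inl ha
  · exact Or.inr (Set.mem_biUnion ha hab)

theorem successors_validation_general {Tx Item : Type*} (S : Schedule Tx Item) (tj : Tx)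
    (htj : tj ∈ S.trans) (hnc : ¬ S.committed tj)
    (hrec : S.Recoverable)
    (V' : VersionOrder S)
    (T : Set Tx)
    (hT : T = successors (S.addCommit tj) V'.lt tj ∪
        ⋃ tk ∈ successors (S.addCommit tj) V'.lt tj,
          RN (mvsgEdge (S.addCommit tj) V'.lt) tk)
    (hC2 : ∀ tm ∈ T, ∀ y : Item, S.writes tm y → ¬ S.readsFrom tj y tm)
    (hD : ∀ tm ∈ T, ∀ (y : Item) (g : Tx),
        S.readsFrom tm y g → S.writes tj y → ¬ V'.lt y g tj) :
    ∀ tk ∈ successors (S.addCommit tj) V'.lt tj,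
      ¬ Relation.TransGen (mvsgEdge (S.addCommit tj) V'.lt) tk tj := by
  intro tk hk hpath
  obtain ⟨tm, htk_tm, hedge⟩ := Relation.TransGen.tail'_iff.mp hpath
  have htm : tm ∈ T := hT ▸ mem_union_biUnion_RN_of_reflTransGen hk htk_tm
  rcases hrec.mvsgEdge_addCommit_into htj hnc hedge with
    ⟨y, hread⟩ | ⟨y, g, hread, hwrite, hlt⟩
  · exact hC2 tm htm y hread.2.1 hread
  · exact hD tm htm y g hread hwrite hlt

/-- **Correctness of the `successors_j` validation (Algorithm 1).**  Let `S`
be a recoverable schedule, `t_j ∈ trans(S)` a running transaction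
(`c_j, a_j ∉ S`) for which RC-Rule holds, and `≪'` a version order for `S`.
In `MVSG(S ∪ {c_j}, ≪')`, let `T := successors_j ∪ ⋃_{t_k ∈ successors_j}
RN(t_k)`.  Suppose for every `t_m ∈ T`:
(C) there are no versions `y_m ∈ ws_m` and `y_n ∈ rs_j` of a common item
`y` with `y_m <_v' y_n`, and no version written by `t_m` is read by `t_j`;
(D) there are no versions `y_g ∈ rs_m` and `y_j ∈ ws_j` of a common item
`y` with `y_g <_v' y_j`.
Then no transaction of `successors_j` has a directed path to `t_j` in
`MVSG(S ∪ {c_j}, ≪')`. -/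
theorem successors_validation {Tx Item : Type*} (S : Schedule Tx Item) (tj : Tx)
    (htj : tj ∈ S.trans) (hnc : ¬ S.committed tj) (hna : ¬ S.aborted tj)
    (hrec : S.Recoverable)
    (hRC : RC_Rule S tj)
    (V' : VersionOrder S)
    (T : Set Tx)
    (hT : T = successors (S.addCommit tj) V'.lt tj ∪
        ⋃ tk ∈ successors (S.addCommit tj) V'.lt tj,
          RN (mvsgEdge (S.addCommit tj) V'.lt) tk)
    (hC1 : ∀ tm ∈ T, ∀ (y : Item) (n : Tx),
        S.writes tm y → S.readsFrom tj y n → ¬ V'.lt y tm n)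
    (hC2 : ∀ tm ∈ T, ∀ y : Item, S.writes tm y → ¬ S.readsFrom tj y tm)
    (hD : ∀ tm ∈ T, ∀ (y : Item) (g : Tx),
        S.readsFrom tm y g → S.writes tj y → ¬ V'.lt y g tj) :
    ∀ tk ∈ successors (S.addCommit tj) V'.lt tj,
      ¬ Relation.TransGen (mvsgEdge (S.addCommit tj) V'.lt) tk tj :=
  successors_validation_general S tj htj hnc hrec V' T hT hC2 hD

end MVCC
end
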